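/- Let D, D* be atomless probability measures on ℝ, and fix 0 < ε < 1. Suppose that for every j ∈ [⌈lg(1/ε)⌉+2] and every i ∈ [2^j], |D(B_{i,j}) - 2^{-j}| < max(ε/j², ε/(lg(1/ε)+3))/10, where B_{i,j} are the dyadic quantile buckets of D*. Then d_K(D, D*) < ε. -/

import Mathlib

/-!
Write `G(t) = D((-∞, q_t])` (`massBelowQuant`), so that
`D(B_{i,j}) = G(i 2^{-j}) - G((i-1) 2^{-j})`. A dyadic point of level `j` is either a point of
level `j - 1` or the right end of a level-`j` bucket whose left end has level `j - 1`, so by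
induction on `j` the bucket errors accumulate to `|G(i 2^{-j}) - i 2^{-j}| ≤ ∑_{k ≤ j} err_k`.
Every `x` lies between two consecutive quantiles `q_{i/n} < x ≤ q_{(i+1)/n}` with `n = 2^J`,
`J = ⌈lg(1/ε)⌉ + 2`; as `D*` has no atoms, its CDF at `x` lies in `[i/n, (i+1)/n]`, while that
of `D` lies in `[G(i/n), G((i+1)/n)]`. Hence `d_K(D, D*) ≤ 2^{-J} + ∑_{k ≤ J} err_k ≤ ε/4 + 3ε/10`.
-/

open MeasureTheory

/-- The (generalized inverse) quantile function `q_x = sup{y : D*((-∞,y]) ≤ x}` of a measure,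
valued in `EReal`, with the special cases `q₀ = -∞` and `q₁ = +∞`. -/
noncomputable def quant (μ : Measure ℝ) (x : ℝ) : EReal :=
  if x = 0 then ⊥ else if x = 1 then ⊤ else
    sSup {z : EReal | ∃ y : ℝ, z = (y : EReal) ∧ (μ (Set.Iic y)).toReal ≤ x}

/-- The dyadic bucket `B_{i,j} = (q_{(i-1)·2^{-j}}, q_{i·2^{-j}}]` determined by the quantile
function of `μ`. -/
noncomputable def bucket (μ : Measure ℝ) (i j : ℕ) : Set ℝ :=
  {y : ℝ | quant μ (((i : ℝ) - 1) * 2 ^ (-(j : ℤ))) < (y : EReal) ∧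
    (y : EReal) ≤ quant μ ((i : ℝ) * 2 ^ (-(j : ℤ)))}

/-- The Kolmogorov distance between measures on `ℝ`. -/
noncomputable def kolDist (μ ν : Measure ℝ) : ℝ :=
  ⨆ x : ℝ, |(μ (Set.Iic x)).toReal - (ν (Set.Iic x)).toReal|

open Set ProbabilityTheory

section Quantile

variable (μ : Measure ℝ)

@[simp] lemma quant_zero : quant μ 0 = ⊥ := if_pos rfl

@[simp] lemma quant_one : quant μ 1 = ⊤ := by simp [quant]

lemma quant_eq_sSup [IsProbabilityMeasure μ] {t : ℝ} (ht0 : t ≠ 0) (ht1 : t ≠ 1) :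
    quant μ t = sSup {z : EReal | ∃ y : ℝ, z = y ∧ cdf μ y ≤ t} := by
  simp only [quant, if_neg ht0, if_neg ht1, cdf_eq_real, measureReal_def]

lemma quant_le_quant {s t : ℝ} (hs : 0 ≤ s) (hst : s ≤ t) (ht : t ≤ 1) :
    quant μ s ≤ quant μ t := by
  rcases eq_or_ne s 0 with rfl | hs0
  · simp
  rcases eq_or_ne t 1 with rfl | ht1
  · simp
  have hs1 : s ≠ 1 := by rintro rfl; exact ht1 (le_antisymm ht hst)
  have ht0 : t ≠ 0 := by rintro rfl; exact hs0 (le_antisymm hst hs)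
  simp only [quant, if_neg hs0, if_neg hs1, if_neg ht0, if_neg ht1]
  exact sSup_le_sSup fun _ ⟨y, hz, hy⟩ => ⟨y, hz, hy.trans hst⟩

lemma le_cdf_of_quant_lt [IsProbabilityMeasure μ] {t x : ℝ} (h : quant μ t < x) :
    t ≤ cdf μ x := by
  rcases eq_or_ne t 0 with rfl | ht0
  · exact cdf_nonneg μ x
  rcases eq_or_ne t 1 with rfl | ht1
  · simp at h
  by_contra! hx
  rw [quant_eq_sSup μ ht0 ht1] at h
  exact h.not_ge (le_sSup ⟨x, rfl, hx.le⟩)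

lemma exists_lt_cdf_of_lt_cdf [IsProbabilityMeasure μ] [NullSingletonClass μ] {t x : ℝ}
    (h : t < cdf μ x) : ∃ y < x, t < cdf μ y := by
  have hleft : cdf μ x ≤ Function.leftLim (cdf μ) x := by
    have := (cdf μ).measure_singleton x
    rw [measure_cdf, measure_singleton, eq_comm, ENNReal.ofReal_eq_zero] at this
    linarith
  have hev := (cdf μ).mono.tendsto_leftLim x |>.eventually (lt_mem_nhds (h.trans_le hleft))
  obtain ⟨y, hy, hyx⟩ := (hev.and self_mem_nhdsWithin).exists
  exact ⟨y, hyx, hy⟩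

lemma cdf_le_of_le_quant [IsProbabilityMeasure μ] [NullSingletonClass μ] {t x : ℝ}
    (h : (x : EReal) ≤ quant μ t) : cdf μ x ≤ t := by
  rcases eq_or_ne t 0 with rfl | ht0
  · simp at h
  rcases eq_or_ne t 1 with rfl | ht1
  · exact cdf_le_one μ x
  by_contra! hx
  obtain ⟨y, hyx, hy⟩ := exists_lt_cdf_of_lt_cdf μ hx
  have hquant : quant μ t ≤ y := by
    rw [quant_eq_sSup μ ht0 ht1]
    refine sSup_le fun _ ⟨w, hz, hw⟩ => hz ▸ EReal.coe_le_coe_iff.2 ?_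
    by_contra! hyw
    exact (hy.trans_le (monotone_cdf μ hyw.le)).not_ge hw
  exact hyx.not_ge (EReal.coe_le_coe_iff.1 (h.trans hquant))

end Quantile

noncomputable def massBelowQuant (ν μ : Measure ℝ) (t : ℝ) : ℝ :=
  ν.real {y : ℝ | (y : EReal) ≤ quant μ t}

lemma massBelowQuant_zero (ν μ : Measure ℝ) : massBelowQuant ν μ 0 = 0 := by
  simp [massBelowQuant]

lemma massBelowQuant_one (ν μ : Measure ℝ) [IsProbabilityMeasure ν] :
    massBelowQuant ν μ 1 = 1 := by
  simp [massBelowQuant]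

lemma measureReal_bucket (ν μ : Measure ℝ) [IsFiniteMeasure ν] {i j : ℕ} (hi : 1 ≤ i)
    (hij : i ≤ 2 ^ j) :
    ν.real (bucket μ i j) =
      massBelowQuant ν μ (i / 2 ^ j) - massBelowQuant ν μ ((i - 1) / 2 ^ j) := by
  have hi' : (1 : ℝ) ≤ i := by exact_mod_cast hi
  have hij' : (i : ℝ) / 2 ^ j ≤ 1 := by
    rw [div_le_one (by positivity)]; exact_mod_cast hij
  have hsub : {y : ℝ | (y : EReal) ≤ quant μ ((i - 1) / 2 ^ j)} ⊆
      {y : ℝ | (y : EReal) ≤ quant μ (i / 2 ^ j)} := fun y hy =>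
    hy.trans (quant_le_quant μ (by have := sub_nonneg.2 hi'; positivity) (by gcongr; linarith) hij')
  rw [massBelowQuant, massBelowQuant, ← measureReal_sdiff hsub
    (measurable_coe_real_ereal measurableSet_Iic)]
  congr 1
  ext y
  simp only [bucket, zpow_neg, zpow_natCast, ← div_eq_mul_inv, mem_ofPred_eq, mem_sdiff, not_le]
  tauto

lemma abs_sub_le_sum_of_dyadic_increments {G : ℝ → ℝ} {err : ℕ → ℝ} {J : ℕ}
    (h0 : G 0 = 0) (h1 : G 1 = 1)
    (hinc : ∀ j, 1 ≤ j → j ≤ J → ∀ i : ℕ, 1 ≤ i → i ≤ 2 ^ j →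
      |G (i / 2 ^ j) - G ((i - 1) / 2 ^ j) - 1 / 2 ^ j| ≤ err j) :
    ∀ j ≤ J, ∀ i : ℕ, i ≤ 2 ^ j → |G (i / 2 ^ j) - i / 2 ^ j| ≤ ∑ k ∈ Finset.Icc 1 j, err k := by
  intro j
  induction j with
  | zero =>
    intro _ i hi
    interval_cases i <;> simp [h0, h1]
  | succ j ih =>
    intro hj i hi
    have herr : 0 ≤ err (j + 1) :=
      (abs_nonneg _).trans (hinc (j + 1) (by omega) hj 1 le_rfl Nat.one_le_two_pow)
    rw [Finset.sum_Icc_succ_top (by omega)]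
    obtain ⟨m, rfl | rfl⟩ := Nat.even_or_odd' i
    · have hm : ((2 * m : ℕ) : ℝ) / 2 ^ (j + 1) = m / 2 ^ j := by
        push_cast; rw [pow_succ]; field_simp
      rw [hm]
      linarith [ih (by omega) m (by rw [pow_succ] at hi; omega)]
    · have hleft : ((2 * m + 1 : ℕ) : ℝ) - 1 = 2 * m := by push_cast; ring
      have hstep := hinc (j + 1) (by omega) hj (2 * m + 1) (by omega) hi
      rw [hleft, show (2 * m : ℝ) / 2 ^ (j + 1) = m / 2 ^ j by rw [pow_succ]; field_simp] at hstep
      have hprev := ih (by omega) m (by rw [pow_succ] at hi; omega)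
      have hsplit : ((2 * m + 1 : ℕ) : ℝ) / 2 ^ (j + 1) = m / 2 ^ j + 1 / 2 ^ (j + 1) := by
        push_cast; rw [pow_succ]; field_simp
      rw [abs_le] at hstep hprev ⊢
      constructor <;> linarith

lemma exists_quant_lt_le (μ : Measure ℝ) {n : ℕ} (hn : 0 < n) (x : ℝ) :
    ∃ i < n, quant μ (i / n) < x ∧ (x : EReal) ≤ quant μ ((i + 1) / n) := by
  classical
  have htop : (x : EReal) ≤ quant μ ((n : ℕ) / n) := by
    rw [div_self (by positivity), quant_one]
    exact le_top
  have hex : ∃ k : ℕ, (x : EReal) ≤ quant μ (k / n) := ⟨n, htop⟩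
  have hspec := Nat.find_spec hex
  have hfind : Nat.find hex ≠ 0 := fun h => by simp [h] at hspec
  obtain ⟨i, hi⟩ := Nat.exists_eq_add_one_of_ne_zero hfind
  rw [hi] at hspec
  refine ⟨i, by have := Nat.find_min' hex htop; omega, not_le.1 (Nat.find_min hex (by omega)), ?_⟩
  exact_mod_cast hspec

lemma abs_cdf_sub_cdf_le (ν μ : Measure ℝ) [IsProbabilityMeasure ν] [IsProbabilityMeasure μ]
    [NullSingletonClass μ] {n : ℕ} (hn : 0 < n) {δ : ℝ}
    (hδ : ∀ i ≤ n, |massBelowQuant ν μ (i / n) - i / n| ≤ δ) (x : ℝ) :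
    |cdf ν x - cdf μ x| ≤ 1 / n + δ := by
  obtain ⟨i, hin, hlo, hhi⟩ := exists_quant_lt_le μ hn x
  have hμlo := le_cdf_of_quant_lt μ hlo
  have hμhi := cdf_le_of_le_quant μ hhi
  have hνlo : massBelowQuant ν μ (i / n) ≤ cdf ν x := by
    rw [cdf_eq_real]
    exact measureReal_mono fun y hy => EReal.coe_le_coe_iff.1 (hy.trans hlo.le)
  have hνhi : cdf ν x ≤ massBelowQuant ν μ ((i + 1) / n) := by
    rw [cdf_eq_real]
    exact measureReal_mono fun y hy => (EReal.coe_le_coe_iff.2 hy).trans hhi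
  have hlo' := abs_le.1 (hδ i hin.le)
  have hhi' := abs_le.1 (hδ (i + 1) hin)
  push_cast at hhi'
  have hstep : ((i : ℝ) + 1) / n = i / n + 1 / n := add_div _ _ _
  rw [abs_le]
  constructor <;> linarith [hlo'.1, hhi'.2]

lemma sum_max_div_sq_le {a M : ℝ} (ha : 0 ≤ a) {J : ℕ} (hJ : (J : ℝ) ≤ M) :
    ∑ k ∈ Finset.Icc 1 J, max (a / (k : ℝ) ^ 2) (a / M) ≤ 3 * a := by
  have hM : 0 ≤ M := (Nat.cast_nonneg J).trans hJ
  have hsq : ∑ k ∈ Finset.Icc 1 J, a / (k : ℝ) ^ 2 ≤ 2 * a := by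
    have hIcc : Finset.Icc 1 J = Finset.Ioo 0 (J + 1) := by ext; simp; omega
    simp_rw [div_eq_mul_inv, ← Finset.mul_sum, hIcc]
    have := sum_Ioo_inv_sq_le (α := ℝ) 0 (J + 1)
    norm_num at this
    nlinarith
  have hconst : ∑ _k ∈ Finset.Icc 1 J, a / M ≤ a := by
    rw [Finset.sum_const, Nat.card_Icc, nsmul_eq_mul, add_tsub_cancel_right, mul_div_left_comm]
    exact mul_le_of_le_one_right ha (div_le_one_of_le₀ hJ hM)
  calc ∑ k ∈ Finset.Icc 1 J, max (a / (k : ℝ) ^ 2) (a / M)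
      ≤ ∑ k ∈ Finset.Icc 1 J, (a / (k : ℝ) ^ 2 + a / M) :=
        Finset.sum_le_sum fun k _ => max_le_add_of_nonneg (by positivity) (by positivity)
    _ ≤ 3 * a := by rw [Finset.sum_add_distrib]; linarith

lemma one_div_two_pow_ceil_logb_add_two_le {ε : ℝ} (hε : 0 < ε) :
    1 / (2 : ℝ) ^ (⌈Real.logb 2 (1 / ε)⌉₊ + 2) ≤ ε / 4 := by
  have h : 1 / ε ≤ 2 ^ ⌈Real.logb 2 (1 / ε)⌉₊ := by
    rw [← Real.rpow_natCast, ← Real.logb_le_iff_le_rpow one_lt_two (by positivity)]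
    exact Nat.le_ceil _
  rw [div_le_iff₀ hε] at h
  rw [pow_add, div_le_div_iff₀ (by positivity) (by norm_num)]
  nlinarith

theorem kolDist_lt_of_buckets_close_general (D Dstar : Measure ℝ) [IsProbabilityMeasure D]
    [IsProbabilityMeasure Dstar] (hDstar : ∀ y : ℝ, Dstar {y} = 0)
    (ε : ℝ) (hε0 : 0 < ε) (hε1 : ε < 1)
    (hclose : ∀ j : ℕ, 1 ≤ j → j ≤ ⌈Real.logb 2 (1 / ε)⌉₊ + 2 →
      ∀ i : ℕ, 1 ≤ i → i ≤ 2 ^ j →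
        |(D (bucket Dstar i j)).toReal - (2 : ℝ) ^ (-(j : ℤ))| <
          max (ε / (j : ℝ) ^ 2) (ε / (Real.logb 2 (1 / ε) + 3)) / 10) :
    kolDist D Dstar < ε := by
  have : NullSingletonClass Dstar := ⟨hDstar⟩
  set L := Real.logb 2 (1 / ε)
  set J := ⌈L⌉₊ + 2
  set err : ℕ → ℝ := fun j => max (ε / (j : ℝ) ^ 2) (ε / (L + 3)) / 10
  have hdyadic := abs_sub_le_sum_of_dyadic_increments (err := err) (J := J)
    (massBelowQuant_zero D Dstar) (massBelowQuant_one D Dstar) fun j hj hjJ i hi hij => by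
      have := (hclose j hj hjJ i hi hij).le
      rwa [← measureReal_def, measureReal_bucket D Dstar hi hij, zpow_neg, zpow_natCast,
        ← one_div] at this
  have hcdf := abs_cdf_sub_cdf_le D Dstar (n := 2 ^ J) (by positivity)
    fun i hi => by exact_mod_cast hdyadic J le_rfl i hi
  have hL : 0 ≤ L := Real.logb_nonneg one_lt_two (by rw [le_div_iff₀ hε0]; linarith)
  have hJL : (J : ℝ) ≤ L + 3 := by push_cast [J]; linarith [Nat.ceil_lt_add_one hL]
  have herr : ∑ k ∈ Finset.Icc 1 J, err k ≤ 3 * ε / 10 := by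
    rw [← Finset.sum_div]; linarith [sum_max_div_sq_le hε0.le hJL]
  calc kolDist D Dstar ≤ 1 / 2 ^ J + ∑ k ∈ Finset.Icc 1 J, err k := ciSup_le fun x => by
        simpa only [cdf_eq_real, measureReal_def, Nat.cast_pow, Nat.cast_ofNat] using hcdf x
    _ < ε := by linarith [one_div_two_pow_ceil_logb_add_two_le hε0]

/-- Contrapositive of the main structural lemma: if every dyadic bucket of `D*` at the levels
`j ∈ [⌈lg(1/ε)⌉+2]` has probability under `D` within `max(ε/j², ε/(lg(1/ε)+3))/10` of `2^{-j}`,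
then `d_K(D, D*) < ε`. -/
theorem kolDist_lt_of_buckets_close (D Dstar : Measure ℝ) [IsProbabilityMeasure D]
    [IsProbabilityMeasure Dstar] (hD : ∀ y : ℝ, D {y} = 0) (hDstar : ∀ y : ℝ, Dstar {y} = 0)
    (ε : ℝ) (hε0 : 0 < ε) (hε1 : ε < 1)
    (hclose : ∀ j : ℕ, 1 ≤ j → j ≤ ⌈Real.logb 2 (1 / ε)⌉₊ + 2 →
      ∀ i : ℕ, 1 ≤ i → i ≤ 2 ^ j →
        |(D (bucket Dstar i j)).toReal - (2 : ℝ) ^ (-(j : ℤ))| <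
          max (ε / (j : ℝ) ^ 2) (ε / (Real.logb 2 (1 / ε) + 3)) / 10) :
    kolDist D Dstar < ε :=
  kolDist_lt_of_buckets_close_general D Dstar hDstar ε hε0 hε1 hclose
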